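/- arXiv:1906.02304 — 5 statements merged into one kernel-verified Lean document; each statement's English description precedes it below -/
import Mathlib

section
/- Let (Ω,Σ) be a measurable space, A a nonempty finite set equipped with the discrete σ-algebra, and B a nonempty compact metric space equipped with its Borel σ-algebra. Let g : Ω × A × B → ℝ be such that x ↦ g(x,α,β) is measurable for every (α,β) ∈ A × B and β ↦ g(x,α,β) is continuous on B for every (x,α) ∈ Ω × A. Then there exists a function β^g : Ω × A → B, measurable with respect to the product σ-algebra on Ω × A, such that g(x,α,β^g(x,α)) = min_{β∈B} g(x,α,β) for all (x,α) ∈ Ω × A. -/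
open Metric Set Filter Topology TopologicalSpace

/-!
The minimum of `f x` over a closed set `K` is an infimum over a countable dense subset of `K`,
hence measurable in `x`; comparing it with the global minimum shows that the set of `x` whose
argmin set meets `K` is measurable. The argmin sets are closed and nonempty, so a measurable
selector is obtained as in the Kuratowski–Ryll-Nardzewski theorem: pick, measurably in `x`
(via `Nat.find`), points of a dense sequence within `2⁻¹ ^ k` of the argmin set, each within
`2 * 2⁻¹ ^ k` of the previous one, and pass to the limit of these Cauchy sequences.
Since `A` is countable, the selectors for the individual `α` glue to a measurable map on `Ω × A`.
-/

theorem measurable_iInf_of_continuous {Ω X : Type*} [MeasurableSpace Ω] [TopologicalSpace X]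
    [SeparableSpace X] (f : Ω → X → ℝ) (hm : ∀ β, Measurable fun x => f x β)
    (hc : ∀ x, Continuous (f x)) :
    Measurable fun x => ⨅ β, f x β := by
  obtain ⟨S, hS, hSd⟩ := exists_countable_dense X
  have := hS.to_subtype
  simp_rw [← hSd.ciInf' (hc _)]
  exact .iInf fun s => hm s

theorem measurableSet_setOf_mem_of_measurable_index {Ω ι : Type*} [MeasurableSpace Ω]
    [MeasurableSpace ι] [Countable ι] [MeasurableSingletonClass ι] {T : ι → Set Ω}
    (hT : ∀ i, MeasurableSet (T i))
    {n : Ω → ι} (hn : Measurable n) :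
    MeasurableSet {x | x ∈ T (n x)} := by
  have : Measurable fun p : Ω × ι => p.1 ∈ T p.2 :=
    measurable_from_prod_countable_left fun i => measurableSet_setOfPred.mp (hT i)
  exact measurableSet_setOfPred.mpr (this.comp (measurable_id.prodMk hn))

section Selection

variable {Ω B : Type*} [MeasurableSpace Ω] [MetricSpace B] {Φ : Ω → Set B}

theorem exists_measurable_index_refine
    (hΦ : ∀ K, IsClosed K → MeasurableSet {x | (Φ x ∩ K).Nonempty})
    {b : ℕ → B} (hb : DenseRange b) {ε : ℝ} (hε : 0 < ε) {D : ℕ → Set B}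
    (hD : ∀ i, IsClosed (D i)) {n : Ω → ℕ} (hn : Measurable n)
    (hnΦ : ∀ x, (Φ x ∩ D (n x)).Nonempty) :
    ∃ n' : Ω → ℕ, Measurable n' ∧
      ∀ x, (Φ x ∩ D (n x) ∩ closedBall (b (n' x)) ε).Nonempty := by
  classical
  have hex : ∀ x, ∃ j, (Φ x ∩ D (n x) ∩ closedBall (b j) ε).Nonempty := fun x => by
    obtain ⟨y, hy⟩ := hnΦ x
    obtain ⟨j, hj⟩ := hb.exists_dist_lt y hε
    exact ⟨j, y, hy, mem_closedBall.mpr (dist_comm y _ ▸ hj.le)⟩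
  refine ⟨fun x => Nat.find (hex x), measurable_find hex fun j => ?_,
    fun x => Nat.find_spec (hex x)⟩
  simp_rw [inter_assoc]
  exact measurableSet_setOf_mem_of_measurable_index
    (fun i => hΦ _ ((hD i).inter isClosed_closedBall)) hn

theorem exists_seq_measurable_index
    (hΦ : ∀ K, IsClosed K → MeasurableSet {x | (Φ x ∩ K).Nonempty})
    (hne : ∀ x, (Φ x).Nonempty) {b : ℕ → B} (hb : DenseRange b) :
    ∃ N : ℕ → Ω → ℕ, (∀ k, Measurable (N k)) ∧
      (∀ k x, (Φ x ∩ closedBall (b (N k x)) (2⁻¹ ^ k)).Nonempty) ∧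
      ∀ k x, dist (b (N k x)) (b (N (k + 1) x)) ≤ 2 * 2⁻¹ ^ k := by
  let P : ℕ → (Ω → ℕ) → Prop := fun k n =>
    Measurable n ∧ ∀ x, (Φ x ∩ closedBall (b (n x)) (2⁻¹ ^ k)).Nonempty
  have step : ∀ k n, P k n → ∃ n', P (k + 1) n' ∧
      ∀ x, dist (b (n x)) (b (n' x)) ≤ 2 * 2⁻¹ ^ k := by
    rintro k n ⟨hn, hnΦ⟩
    obtain ⟨n', hn', hn'Φ⟩ := exists_measurable_index_refine hΦ hb (ε := 2⁻¹ ^ (k + 1))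
      (by positivity) (fun _ => isClosed_closedBall) hn hnΦ
    refine ⟨n', ⟨hn', fun x => (hn'Φ x).mono fun y hy => ⟨hy.1.1, hy.2⟩⟩, fun x => ?_⟩
    obtain ⟨y, ⟨-, hy⟩, hy'⟩ := hn'Φ x
    calc dist (b (n x)) (b (n' x)) ≤ dist (b (n x)) y + dist y (b (n' x)) := dist_triangle _ _ _
      _ ≤ 2⁻¹ ^ k + 2⁻¹ ^ (k + 1) := add_le_add (dist_comm y _ ▸ hy) hy'
      _ ≤ 2 * 2⁻¹ ^ k := by
        rw [pow_succ]; linarith [pow_nonneg (by norm_num : (0 : ℝ) ≤ 2⁻¹) k]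
  obtain ⟨n₀, hn₀, hn₀Φ⟩ := exists_measurable_index_refine hΦ hb one_pos
    (fun _ => isClosed_univ) (measurable_const (a := 0)) (by simpa using hne)
  have base : P 0 n₀ := ⟨hn₀, by simpa using hn₀Φ⟩
  choose! next hnextP hnext using step
  let N : ℕ → Ω → ℕ := fun k => Nat.rec (motive := fun _ => Ω → ℕ) n₀ next k
  have hN : ∀ k, P k (N k) := fun k => by
    induction k with
    | zero => exact base
    | succ k ih => exact hnextP k _ ih
  exact ⟨N, fun k => (hN k).1, fun k => (hN k).2, fun k => hnext k _ (hN k)⟩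

variable [CompleteSpace B] [SeparableSpace B] [MeasurableSpace B] [BorelSpace B]

/-- Kuratowski–Ryll-Nardzewski selection theorem. -/
theorem exists_measurable_selection_of_isClosed
    (hΦ : ∀ K, IsClosed K → MeasurableSet {x | (Φ x ∩ K).Nonempty})
    (hne : ∀ x, (Φ x).Nonempty) (hclosed : ∀ x, IsClosed (Φ x)) :
    ∃ s : Ω → B, Measurable s ∧ ∀ x, s x ∈ Φ x := by
  rcases isEmpty_or_nonempty Ω with hΩ | ⟨⟨x₀⟩⟩
  · exact ⟨isEmptyElim, measurable_of_empty _, isEmptyElim⟩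
  have : Nonempty B := ⟨(hne x₀).some⟩
  obtain ⟨b, hb⟩ := exists_dense_seq B
  obtain ⟨N, hNm, hNΦ, hNdist⟩ := exists_seq_measurable_index hΦ hne hb
  have hlim : ∀ x,
      Tendsto (fun k => b (N k x)) atTop (𝓝 (limUnder atTop fun k => b (N k x))) :=
    fun x => (cauchySeq_of_le_geometric 2⁻¹ 2 (by norm_num) (hNdist · x)).tendsto_limUnder
  refine ⟨fun x => limUnder atTop fun k => b (N k x),
    measurable_of_tendsto_metrizable (fun k => measurable_from_top.comp (hNm k))
      (tendsto_pi_nhds.mpr hlim), fun x => ?_⟩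
  choose y hy using fun k => hNΦ k x
  have hy_lim : Tendsto y atTop (𝓝 (limUnder atTop fun k => b (N k x))) :=
    (hlim x).congr_dist <| squeeze_zero (fun _ => dist_nonneg)
      (fun k => dist_comm (y k) _ ▸ mem_closedBall.mp (hy k).2)
      (tendsto_pow_atTop_nhds_zero_of_lt_one (by norm_num) (by norm_num))
  exact (hclosed x).mem_of_tendsto hy_lim (.of_forall fun k => (hy k).1)

end Selection

section Argmin

variable {Ω B : Type*} [MeasurableSpace Ω] [MetricSpace B] [CompactSpace B]
  {f : Ω → B → ℝ}

theorem measurableSet_setOf_exists_isMinOn_mem (hm : ∀ β, Measurable fun x => f x β)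
    (hc : ∀ x, Continuous (f x)) {K : Set B} (hK : IsClosed K) :
    MeasurableSet {x | ({β | IsMinOn (f x) univ β} ∩ K).Nonempty} := by
  rcases K.eq_empty_or_nonempty with rfl | hKne
  · simp
  have : CompactSpace K := isCompact_iff_compactSpace.mp hK.isCompact
  have : Nonempty K := hKne.to_subtype
  have : Nonempty B := ⟨hKne.some⟩
  have hmin : ∀ x, ∃ β ∈ K, IsMinOn (f x) K β := fun x =>
    hK.isCompact.exists_isMinOn hKne (hc x).continuousOn
  convert measurableSet_le (measurable_iInf_of_continuous (fun x (β : K) => f x β)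
    (fun β => hm β) fun x => (hc x).comp continuous_subtype_val)
    (measurable_iInf_of_continuous f hm hc) using 1
  ext x
  obtain ⟨β₀, hβ₀K, hβ₀⟩ := hmin x
  simp only [mem_ofPred_eq]
  rw [hβ₀.iInf_eq hβ₀K, le_ciInf_iff (isCompact_range (hc x)).bddBelow]
  constructor
  · rintro ⟨β, hβ, hβK⟩ β'
    exact (hβ₀ hβK).trans (hβ (mem_univ β'))
  · exact fun h => ⟨β₀, fun β' _ => h β', hβ₀K⟩

variable [Nonempty B] [MeasurableSpace B] [BorelSpace B]

theorem exists_measurable_isMinOn (hm : ∀ β, Measurable fun x => f x β)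
    (hc : ∀ x, Continuous (f x)) :
    ∃ s : Ω → B, Measurable s ∧ ∀ x, IsMinOn (f x) univ (s x) :=
  exists_measurable_selection_of_isClosed
    (fun _ hK => measurableSet_setOf_exists_isMinOn_mem hm hc hK)
    (fun x => (isCompact_univ.exists_isMinOn univ_nonempty (hc x).continuousOn).imp
      fun _ h => h.2)
    fun x => by
      simp only [isMinOn_univ_iff, ofPred_forall]
      exact isClosed_iInter fun β' => isClosed_le (hc x) continuous_const

end Argmin

theorem stmt3_general {Ω : Type*} [MeasurableSpace Ω]
    {A : Type*} [Fintype A] [MeasurableSpace A] [MeasurableSingletonClass A]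
    {B : Type*} [MetricSpace B] [CompactSpace B] [Nonempty B]
    [MeasurableSpace B] [BorelSpace B]
    (g : Ω → A → B → ℝ)
    (hmeas : ∀ α β, Measurable (fun x => g x α β))
    (hcont : ∀ x α, Continuous (g x α)) :
    ∃ βg : Ω × A → B, Measurable βg ∧
      ∀ (x : Ω) (α : A) (β : B), g x α (βg (x, α)) ≤ g x α β := by
  choose s hs hmin using fun α =>
    exists_measurable_isMinOn (f := fun x => g x α) (hmeas α) (hcont · α)
  exact ⟨fun p => s p.2 p.1, measurable_from_prod_countable_left hs,
    fun x α β => hmin α x (mem_univ β)⟩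

/-- Measurable selection of pointwise minimizers: if `g : Ω × A × B → ℝ` is measurable in
`x` and continuous in `β`, with `A` nonempty finite (discrete σ-algebra) and `B` a nonempty
compact metric space (Borel σ-algebra), then there is a jointly measurable
`βg : Ω × A → B` with `g x α (βg (x,α)) = min_β g x α β` for all `(x,α)`. -/
theorem stmt3 {Ω : Type*} [MeasurableSpace Ω]
    {A : Type*} [Fintype A] [Nonempty A] [MeasurableSpace A] [MeasurableSingletonClass A]
    {B : Type*} [MetricSpace B] [CompactSpace B] [Nonempty B]
    [MeasurableSpace B] [BorelSpace B]
    (g : Ω → A → B → ℝ)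
    (hmeas : ∀ α β, Measurable (fun x => g x α β))
    (hcont : ∀ x α, Continuous (g x α)) :
    ∃ βg : Ω × A → B, Measurable βg ∧
      ∀ (x : Ω) (α : A) (β : B), g x α (βg (x, α)) ≤ g x α β :=
  stmt3_general g hmeas hcont
end

section
/- For every u ∈ ℝ^m and every ε > 0 there exists δ > 0 such that for every s ∈ ℝ^m with 0 < ‖s‖ ≤ δ and every β_s ∈ B satisfying b(β_s)·(u+s) − f(β_s) = m̂(u+s), one has |m̂(u+s) − m̂(u) − b(β_s)·s| ≤ ε‖s‖. (That is, the concave minimum function m̂ is semismooth on ℝ^m with generalized gradients b(β_s) taken at minimizers for the perturbed point.) -/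
/-!
Write `g v β = b(β)·v - f(β)`, so that `m̂ v = min_β g v β`. For a minimizer `β₀` at `u` and a
minimizer `βs` at `u + s`, comparing each minimum with the value of `g` at the other minimizer
gives `0 ≤ m̂(u+s) - m̂(u) - b(βs)·s ≤ (b(β₀) - b(βs))·s ≤ ‖b(β₀) - b(βs)‖ ‖s‖`.
It remains to choose `β₀` with `b(β₀)` close to `b(βs)`: the set of pairs `(v, β)` with `β`
minimizing `g v` is closed in `ℝ^m × B`, and since `B` is compact the projection to `ℝ^m` is a
closed map, so minimizers at points near `u` lie in any prescribed open neighbourhood of the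
minimizers at `u`.
-/

open Filter Topology Metric Set
open scoped RealInnerProductSpace

section ArgminUpperSemicontinuous

variable {X B : Type*} [TopologicalSpace X] [TopologicalSpace B] [CompactSpace B]

theorem eventually_forall_mem_of_isClosed_of_compactSpace {C : Set (X × B)} (hC : IsClosed C)
    {U : Set B} (hU : IsOpen U) {u : X} (hCu : ∀ β, (u, β) ∈ C → β ∈ U) :
    ∀ᶠ v in 𝓝 u, ∀ β, (v, β) ∈ C → β ∈ U := by
  have hclosed : IsClosed (Prod.fst '' (C ∩ univ ×ˢ Uᶜ)) :=
    isClosedMap_fst_of_compactSpace _ (hC.inter (isClosed_univ.prod hU.isClosed_compl))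
  filter_upwards [hclosed.isOpen_compl.mem_nhds fun ⟨⟨_, β⟩, ⟨hβC, _, hβU⟩, rfl⟩ =>
    hβU (hCu β hβC)] with v hv β hβ
  by_contra hβU
  exact hv ⟨(v, β), ⟨hβ, mem_univ _, hβU⟩, rfl⟩

theorem eventually_forall_isMinOn_mem {g : X → B → ℝ} (hg : Continuous (Function.uncurry g))
    {U : Set B} (hU : IsOpen U) {u : X} (hu : ∀ β, IsMinOn (g u) univ β → β ∈ U) :
    ∀ᶠ v in 𝓝 u, ∀ β, IsMinOn (g v) univ β → β ∈ U := by
  have hC : IsClosed {p : X × B | IsMinOn (g p.1) univ p.2} := by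
    simp only [isMinOn_univ_iff, ofPred_forall]
    exact isClosed_iInter fun β' =>
      isClosed_le hg (hg.comp (continuous_fst.prodMk continuous_const))
  exact eventually_forall_mem_of_isClosed_of_compactSpace hC hU hu

end ArgminUpperSemicontinuous

theorem isMinOn_univ_iff_eq_ciInf {B : Type*} {g : B → ℝ} (hg : BddBelow (range g)) {β : B} :
    IsMinOn g univ β ↔ g β = ⨅ β', g β' := by
  refine ⟨fun h => ?_, fun h => isMinOn_univ_iff.2 fun β' => h ▸ ciInf_le hg β'⟩
  have : Nonempty B := ⟨β⟩
  exact le_antisymm (le_ciInf (isMinOn_univ_iff.1 h)) (ciInf_le hg β)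

theorem abs_sub_sub_inner_le_norm_sub_mul_norm {ι E : Type*} [NormedAddCommGroup E]
    [InnerProductSpace ℝ E] {b : ι → E} {f : ι → ℝ} {mhat : E → ℝ}
    (hle : ∀ v β, mhat v ≤ ⟪b β, v⟫ - f β) {u s : E} {β₀ βs : ι}
    (h₀ : mhat u = ⟪b β₀, u⟫ - f β₀) (hs : mhat (u + s) = ⟪b βs, u + s⟫ - f βs) :
    |mhat (u + s) - mhat u - ⟪b βs, s⟫| ≤ ‖b β₀ - b βs‖ * ‖s‖ := by
  have hu := hle u βs
  have hus := hle (u + s) β₀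
  have hcs := real_inner_le_norm (b β₀ - b βs) s
  rw [inner_add_right] at hs hus
  rw [inner_sub_left] at hcs
  refine abs_le.2 ⟨?_, by linarith⟩
  nlinarith [norm_nonneg (b β₀ - b βs), norm_nonneg s]

theorem stmt5_general {m : ℕ} {B : Type*} [MetricSpace B] [CompactSpace B]
    (b : B → EuclideanSpace ℝ (Fin m)) (f : B → ℝ)
    (hb : Continuous b) (hf : Continuous f)
    (mhat : EuclideanSpace ℝ (Fin m) → ℝ)
    (hm : ∀ u, mhat u = ⨅ β : B, ((inner ℝ (b β) u : ℝ) - f β)) :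
    ∀ (u : EuclideanSpace ℝ (Fin m)), ∀ ε > (0 : ℝ), ∃ δ > (0 : ℝ),
      ∀ s : EuclideanSpace ℝ (Fin m), 0 < ‖s‖ → ‖s‖ ≤ δ →
        ∀ βs : B, (inner ℝ (b βs) (u + s) : ℝ) - f βs = mhat (u + s) →
          |mhat (u + s) - mhat u - (inner ℝ (b βs) s : ℝ)| ≤ ε * ‖s‖ := by
  intro u ε hε
  set g : EuclideanSpace ℝ (Fin m) → B → ℝ := fun v β => ⟪b β, v⟫ - f β
  have hg : Continuous (Function.uncurry g) :=
    ((hb.comp continuous_snd).inner continuous_fst).sub (hf.comp continuous_snd)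
  have hbdd : ∀ v, BddBelow (range (g v)) := fun v =>
    (isCompact_range (hg.comp (continuous_const.prodMk continuous_id))).bddBelow
  have hmin : ∀ v β, IsMinOn (g v) univ β ↔ g v β = mhat v := fun v β => by
    rw [hm, isMinOn_univ_iff_eq_ciInf (hbdd v)]
  obtain ⟨δ, hδ, hnear⟩ := Metric.eventually_nhds_iff.1 <| eventually_forall_isMinOn_mem hg
    (isOpen_thickening.preimage hb) fun β hβ => self_subset_thickening hε _ (mem_image_of_mem b hβ)
  refine ⟨δ / 2, half_pos hδ, fun s _ hsδ βs hβs => ?_⟩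
  have hβs_near := hnear (by rw [dist_self_add_left]; linarith) βs ((hmin _ _).2 hβs)
  obtain ⟨_, ⟨β₀, hβ₀, rfl⟩, hdist⟩ := mem_thickening_iff.1 hβs_near
  calc |mhat (u + s) - mhat u - ⟪b βs, s⟫|
      ≤ ‖b β₀ - b βs‖ * ‖s‖ :=
        abs_sub_sub_inner_le_norm_sub_mul_norm (fun v β => (hm v).symm ▸ ciInf_le (hbdd v) β)
          ((hmin u β₀).1 hβ₀).symm hβs.symm
    _ ≤ ε * ‖s‖ := by
        gcongr
        rw [← dist_eq_norm, dist_comm]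
        exact hdist.le

/-- Semismoothness of the concave minimum function
`m̂(u) = min_{β ∈ B} (b(β)·u - f(β))` on `ℝ^m`: for every `u` and `ε > 0` there is `δ > 0`
such that for every `s` with `0 < ‖s‖ ≤ δ` and every minimizer `βs` attaining `m̂(u+s)`,
`|m̂(u+s) - m̂(u) - b(βs)·s| ≤ ε‖s‖`. -/
theorem stmt5 {m : ℕ} {B : Type*} [MetricSpace B] [CompactSpace B] [Nonempty B]
    (b : B → EuclideanSpace ℝ (Fin m)) (f : B → ℝ)
    (hb : Continuous b) (hf : Continuous f)
    (mhat : EuclideanSpace ℝ (Fin m) → ℝ)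
    (hm : ∀ u, mhat u = ⨅ β : B, ((inner ℝ (b β) u : ℝ) - f β)) :
    ∀ (u : EuclideanSpace ℝ (Fin m)), ∀ ε > (0 : ℝ), ∃ δ > (0 : ℝ),
      ∀ s : EuclideanSpace ℝ (Fin m), 0 < ‖s‖ → ‖s‖ ≤ δ →
        ∀ βs : B, (inner ℝ (b βs) (u + s) : ℝ) - f βs = mhat (u + s) →
          |mhat (u + s) - mhat u - (inner ℝ (b βs) s : ℝ)| ≤ ε * ‖s‖ :=
  stmt5_general b f hb hf mhat hm
end

section
/- Let u : Ω × A → ℝ satisfy u(·,α) ∈ L^p(μ) for every α ∈ A. Then for every ε > 0 there exists δ > 0 such that: for every v : Ω × A → ℝ with v(·,α) ∈ L^p(μ) for every α ∈ A and with 0 < ∑_{α∈A} ‖v(·,α)‖_{L^p(μ)} ≤ δ, and for every measurable function α_v : Ω → A satisfying u(x,α_v(x)) + v(x,α_v(x)) = max_{α∈A} (u(x,α) + v(x,α)) for μ-a.e. x ∈ Ω, one has ‖F₂(u+v) − F₂(u) − v(·, α_v(·))‖_{L²(μ)} ≤ ε · ∑_{α∈A} ‖v(·,α)‖_{L^p(μ)}.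 (That is, the pointwise maximum operator F₂ from (L^p(μ))^{|A|} to L²(μ) is semismooth with generalized differential v ↦ v(·, α_v(·)).) -/
open MeasureTheory Filter Set
open scoped ENNReal Topology

/-!
If `αv x` maximizes `u x · + v x ·`, the remainder `max (u + v) - max u - v (αv)` equals
`u (αv) - max u`: it is bounded by `2 ∑ |v|`, and it vanishes unless two distinct values of
`u x ·` lie within `2 ∑ |v x ·|` of each other. So it is supported in the union of the set of
`τ`-near-ties of `u`, whose measure tends to `0` with `τ`, and the Chebyshev set
`{2 ∑ |v| ≥ τ}`, whose measure is `O(‖v‖_q ^ q)`. Hölder's inequality on that set bounds the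
`L^r` norm of the remainder by `2 ‖v‖_q` times the measure of the set to the power
`1/r - 1/q > 0`, and this factor is small once `τ`, and then `‖v‖_q`, is small.
-/

section NearTie

variable {X A : Type*}

def nearTieSet (u : X → A → ℝ) (τ : ℝ) : Set X :=
  {x | ∃ a b, u x a < u x b ∧ u x b ≤ u x a + τ}

lemma nearTieSet_mono (u : X → A → ℝ) : Monotone (nearTieSet u) :=
  fun _ _ hτ _ ⟨a, b, hab, hba⟩ => ⟨a, b, hab, hba.trans (by gcongr)⟩

lemma biInter_nearTieSet_eq_empty [Fintype A] (u : X → A → ℝ) :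
    ⋂ τ > 0, nearTieSet u τ = ∅ := by
  refine eq_empty_of_forall_notMem fun x hx => ?_
  simp only [mem_iInter] at hx
  obtain ⟨a, b, hab, -⟩ := hx 1 one_pos
  obtain ⟨⟨a', b'⟩, hab', hmin⟩ := Finset.exists_min_image
    (Finset.univ.filter fun p : A × A => u x p.1 < u x p.2) (fun p => u x p.2 - u x p.1)
    ⟨(a, b), by simpa using hab⟩
  obtain ⟨c, d, hcd, hdc⟩ := hx ((u x b' - u x a') / 2) (by simp at hab'; linarith)
  have := hmin (c, d) (by simpa using hcd)
  linarith

variable [MeasurableSpace X] {μ : Measure X} [Fintype A] {u : X → A → ℝ}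

lemma nullMeasurableSet_nearTieSet (hu : ∀ α, AEMeasurable (fun x => u x α) μ) (τ : ℝ) :
    NullMeasurableSet (nearTieSet u τ) μ := by
  simp only [nearTieSet, ofPred_exists, ofPred_and]
  exact .iUnion fun a => .iUnion fun b =>
    (nullMeasurableSet_lt (hu a) (hu b)).inter (nullMeasurableSet_le (hu b) ((hu a).add_const τ))

lemma tendsto_measure_nearTieSet [IsFiniteMeasure μ] (hu : ∀ α, AEMeasurable (fun x => u x α) μ) :
    Tendsto (fun τ => μ (nearTieSet u τ)) (𝓝[>] 0) (𝓝 0) := by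
  have := tendsto_measure_biInter_gt (μ := μ)
    (fun τ _ => nullMeasurableSet_nearTieSet hu τ) (fun _ _ _ h => nearTieSet_mono u h)
    ⟨1, one_pos, measure_ne_top μ _⟩
  rwa [biInter_nearTieSet_eq_empty, measure_empty] at this

end NearTie

section Lp

variable {X : Type*} [MeasurableSpace X] {μ : Measure X}

lemma eLpNorm_le_eLpNorm_mul_measure_rpow {E F : Type*} [NormedAddCommGroup E]
    [NormedAddCommGroup F] {f : X → E} {g : X → F} {s : Set X} {r q : ℝ≥0∞} (hrq : r ≤ q)
    (hg : AEStronglyMeasurable g μ) (hfg : ∀ᵐ x ∂μ, ‖f x‖ ≤ ‖g x‖)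
    (hfs : ∀ᵐ x ∂μ, f x ≠ 0 → x ∈ s) :
    eLpNorm f r μ ≤ eLpNorm g q μ * μ s ^ (1 / r.toReal - 1 / q.toReal) := by
  set t := toMeasurable μ s
  have hft : ∀ᵐ x ∂μ, ‖f x‖ ≤ ‖t.indicator g x‖ := by
    filter_upwards [hfg, hfs] with x hfgx hfsx
    by_cases hx : x ∈ t
    · rwa [indicator_of_mem hx]
    · simp [indicator_of_notMem hx,
        not_imp_comm.1 hfsx fun hxs => hx (subset_toMeasurable μ s hxs)]
  calc eLpNorm f r μ ≤ eLpNorm (t.indicator g) r μ := eLpNorm_mono_ae hft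
    _ = eLpNorm g r (μ.restrict t) :=
      eLpNorm_indicator_eq_eLpNorm_restrict (measurableSet_toMeasurable μ s)
    _ ≤ eLpNorm g q (μ.restrict t) * μ.restrict t univ ^ (1 / r.toReal - 1 / q.toReal) :=
      eLpNorm_le_eLpNorm_mul_rpow_measure_univ hrq hg.restrict
    _ ≤ eLpNorm g q μ * μ s ^ (1 / r.toReal - 1 / q.toReal) := by
      rw [Measure.restrict_apply_univ, measure_toMeasurable]
      gcongr
      exact Measure.restrict_le_self

lemma eLpNorm_sum_abs_le {A : Type*} [Fintype A] {v : X → A → ℝ} {q : ℝ≥0∞} (hq : 1 ≤ q)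
    (hv : ∀ α, AEStronglyMeasurable (fun x => v x α) μ) :
    eLpNorm (fun x => ∑ α, |v x α|) q μ ≤ ∑ α, eLpNorm (fun x => v x α) q μ := by
  have := eLpNorm_sum_le (s := Finset.univ) (fun α _ => (hv α).norm) hq
  simp only [eLpNorm_norm] at this
  simpa only [Finset.sum_fn, Real.norm_eq_abs] using this

end Lp

section SupRemainder

variable {X A : Type*} [Fintype A] [Nonempty A]

lemma exists_ciSup_add_sub_ciSup_sub_eq {U V : A → ℝ} {γ : A}
    (hγ : U γ + V γ = ⨆ α, (U α + V α)) :
    ∃ β, (⨆ α, (U α + V α)) - (⨆ α, U α) - V γ = U γ - U β ∧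
      U γ ≤ U β ∧ U β ≤ U γ + 2 * ∑ α, |V α| := by
  obtain ⟨β, hβ⟩ := exists_eq_ciSup_of_finite (f := U)
  have hβγ : U β + V β ≤ U γ + V γ :=
    hγ ▸ le_ciSup (Finite.bddAbove_range fun α => U α + V α) β
  have hVβ : -V β ≤ ∑ α, |V α| :=
    (neg_le_abs _).trans (Finset.single_le_sum (fun α _ => abs_nonneg (V α)) (Finset.mem_univ β))
  have hVγ : V γ ≤ ∑ α, |V α| :=
    (le_abs_self _).trans (Finset.single_le_sum (fun α _ => abs_nonneg (V α)) (Finset.mem_univ γ))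
  exact ⟨β, by rw [← hγ, hβ]; ring, hβ ▸ le_ciSup (Finite.bddAbove_range U) γ, by linarith⟩

noncomputable def supRemainder (u v : X → A → ℝ) (αv : X → A) (x : X) : ℝ :=
  (⨆ α, (u x α + v x α)) - (⨆ α, u x α) - v x (αv x)

variable {u v : X → A → ℝ} {αv : X → A}

lemma abs_supRemainder_le {x : X} (hx : u x (αv x) + v x (αv x) = ⨆ α, (u x α + v x α)) :
    |supRemainder u v αv x| ≤ 2 * ∑ α, |v x α| := by
  obtain ⟨β, heq, hγβ, hβγ⟩ := exists_ciSup_add_sub_ciSup_sub_eq hx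
  rw [supRemainder, heq, abs_of_nonpos (by linarith)]
  linarith

lemma mem_nearTieSet_of_supRemainder_ne_zero {x : X}
    (hx : u x (αv x) + v x (αv x) = ⨆ α, (u x α + v x α)) (hne : supRemainder u v αv x ≠ 0) :
    x ∈ nearTieSet u (2 * ∑ α, |v x α|) := by
  obtain ⟨β, heq, hγβ, hβγ⟩ := exists_ciSup_add_sub_ciSup_sub_eq hx
  refine ⟨αv x, β, lt_of_le_of_ne hγβ fun h => hne ?_, hβγ⟩
  rw [supRemainder, heq, h, sub_self]

variable [MeasurableSpace X] {μ : Measure X}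

lemma eLpNorm_supRemainder_le {r q : ℝ≥0∞} (hr : r ≠ 0) (hrq : r ≤ q) (hq : q ≠ ∞)
    (hq1 : 1 ≤ q) (hv : ∀ α, AEStronglyMeasurable (fun x => v x α) μ)
    (hαv : ∀ᵐ x ∂μ, u x (αv x) + v x (αv x) = ⨆ α, (u x α + v x α)) {τ : ℝ} (hτ : 0 < τ) :
    eLpNorm (supRemainder u v αv) r μ ≤ 2 * (∑ α, eLpNorm (fun x => v x α) q μ) *
      (μ (nearTieSet u τ) + (ENNReal.ofReal τ)⁻¹ ^ q.toReal *
        (2 * ∑ α, eLpNorm (fun x => v x α) q μ) ^ q.toReal) ^ (1 / r.toReal - 1 / q.toReal) := by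
  set g : X → ℝ := fun x => 2 * ∑ α, |v x α|
  have hg : AEStronglyMeasurable g μ :=
    (Finset.aestronglyMeasurable_fun_sum _ fun α _ => (hv α).norm).const_mul 2
  have hg_norm : eLpNorm g q μ ≤ 2 * ∑ α, eLpNorm (fun x => v x α) q μ := by
    rw [show g = (2 : ℝ) • fun x => ∑ α, |v x α| from rfl, eLpNorm_const_smul,
      show ‖(2 : ℝ)‖ₑ = 2 by simp [Real.enorm_eq_ofReal]]
    gcongr
    exact eLpNorm_sum_abs_le hq1 hv
  have hc : 0 ≤ 1 / r.toReal - 1 / q.toReal :=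
    sub_nonneg.2 <| one_div_le_one_div_of_le
      (ENNReal.toReal_pos hr (ne_top_of_le_ne_top hq hrq)) (ENNReal.toReal_mono hq hrq)
  calc eLpNorm (supRemainder u v αv) r μ
      ≤ eLpNorm g q μ * μ (nearTieSet u τ ∪ {x | ENNReal.ofReal τ ≤ ‖g x‖ₑ}) ^
          (1 / r.toReal - 1 / q.toReal) := by
        refine eLpNorm_le_eLpNorm_mul_measure_rpow hrq hg ?_ ?_
        · filter_upwards [hαv] with x hx
          rw [Real.norm_eq_abs, Real.norm_eq_abs]
          exact (abs_supRemainder_le hx).trans (le_abs_self _)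
        · filter_upwards [hαv] with x hx hne
          by_cases hgx : ENNReal.ofReal τ ≤ ‖g x‖ₑ
          · exact Or.inr hgx
          refine Or.inl (nearTieSet_mono u ?_ (mem_nearTieSet_of_supRemainder_ne_zero hx hne))
          rw [not_le, Real.enorm_eq_ofReal_abs, ENNReal.ofReal_lt_ofReal_iff hτ] at hgx
          exact (le_abs_self _).trans hgx.le
    _ ≤ _ := by
        gcongr
        refine (measure_union_le _ _).trans (add_le_add_right ?_ _)
        calc μ {x | ENNReal.ofReal τ ≤ ‖g x‖ₑ}
            ≤ (ENNReal.ofReal τ)⁻¹ ^ q.toReal * eLpNorm g q μ ^ q.toReal :=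
              meas_ge_le_mul_pow_eLpNorm_enorm μ (by positivity) hq hg (by simpa using hτ) (by simp)
          _ ≤ _ := by gcongr

theorem exists_pos_eLpNorm_supRemainder_le [IsFiniteMeasure μ] {r q : ℝ≥0∞} (hr : r ≠ 0)
    (hrq : r < q) (hq : q ≠ ∞) (hq1 : 1 ≤ q) (hu : ∀ α, AEMeasurable (fun x => u x α) μ)
    {ε : ℝ≥0∞} (hε : 0 < ε) :
    ∃ δ > 0, ∀ v : X → A → ℝ, (∀ α, AEStronglyMeasurable (fun x => v x α) μ) →
      ∑ α, eLpNorm (fun x => v x α) q μ ≤ δ →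
      ∀ αv : X → A, (∀ᵐ x ∂μ, u x (αv x) + v x (αv x) = ⨆ α, (u x α + v x α)) →
      eLpNorm (supRemainder u v αv) r μ ≤ ε * ∑ α, eLpNorm (fun x => v x α) q μ := by
  set c := 1 / r.toReal - 1 / q.toReal
  have hc : 0 < c :=
    sub_pos.2 <| one_div_lt_one_div_of_lt
      (ENNReal.toReal_pos hr (hrq.trans_le le_top).ne) (ENNReal.toReal_strict_mono hq hrq)
  obtain ⟨τ, hτε, hτ⟩ : ∃ τ, 2 * μ (nearTieSet u τ) ^ c < ε ∧ 0 < τ := by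
    have := ENNReal.Tendsto.const_mul (a := 2)
      ((ENNReal.continuous_rpow_const (y := c)).tendsto 0 |>.comp (tendsto_measure_nearTieSet hu))
      (Or.inr ENNReal.ofNat_ne_top)
    rw [ENNReal.zero_rpow_of_pos hc, mul_zero] at this
    exact ((this.eventually (gt_mem_nhds hε)).and self_mem_nhdsWithin).exists
  set Φ : ℝ≥0∞ → ℝ≥0∞ := fun s =>
    2 * (μ (nearTieSet u τ) + (ENNReal.ofReal τ)⁻¹ ^ q.toReal * (2 * s) ^ q.toReal) ^ c
  have hΦ : Tendsto Φ (𝓝 0) (𝓝 (Φ 0)) := by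
    refine ENNReal.Tendsto.const_mul ?_ (Or.inr ENNReal.ofNat_ne_top)
    refine (ENNReal.continuous_rpow_const.tendsto _).comp ?_
    refine tendsto_const_nhds.add (ENNReal.Tendsto.const_mul ?_ (Or.inr ?_))
    · exact (ENNReal.continuous_rpow_const.tendsto _).comp
        (ENNReal.Tendsto.const_mul tendsto_id (Or.inr ENNReal.ofNat_ne_top))
    · exact ENNReal.rpow_ne_top_of_nonneg ENNReal.toReal_nonneg
        (ENNReal.inv_ne_top.2 (ENNReal.ofReal_pos.2 hτ).ne')
  have hΦ0 : Φ 0 = 2 * μ (nearTieSet u τ) ^ c := by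
    simp [Φ, ENNReal.zero_rpow_of_pos (ENNReal.toReal_pos (zero_lt_one.trans_le hq1).ne' hq)]
  obtain ⟨δ, hδ, hδε⟩ := ENNReal.nhds_zero_basis_Iic.eventually_iff.1
    (hΦ.eventually (gt_mem_nhds (hΦ0 ▸ hτε)))
  refine ⟨δ, hδ, fun v hv hvδ αv hαv => ?_⟩
  calc eLpNorm (supRemainder u v αv) r μ
      ≤ 2 * (∑ α, eLpNorm (fun x => v x α) q μ) *
          (μ (nearTieSet u τ) + (ENNReal.ofReal τ)⁻¹ ^ q.toReal *
            (2 * ∑ α, eLpNorm (fun x => v x α) q μ) ^ q.toReal) ^ c :=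
        eLpNorm_supRemainder_le hr hrq.le hq hq1 hv hαv hτ
    _ = Φ (∑ α, eLpNorm (fun x => v x α) q μ) * ∑ α, eLpNorm (fun x => v x α) q μ := by
        simp only [Φ]; ring
    _ ≤ ε * ∑ α, eLpNorm (fun x => v x α) q μ := by
        gcongr
        exact (hδε hvδ).le

end SupRemainder

theorem stmt9_general {n : ℕ} {A : Type*} [Fintype A] [Nonempty A]
    [MeasurableSpace A]
    (Ω : Set (Fin n → ℝ)) (hΩbdd : Bornology.IsBounded Ω)
    (p : ℝ) (hp : 2 < p)
    (μ : Measure (Fin n → ℝ)) (hμ : μ = volume.restrict Ω)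
    (u : (Fin n → ℝ) → A → ℝ)
    (hu : ∀ α : A, MemLp (fun x => u x α) (ENNReal.ofReal p) μ) :
    ∀ ε > (0 : ℝ), ∃ δ > (0 : ℝ),
      ∀ v : (Fin n → ℝ) → A → ℝ,
        (∀ α : A, MemLp (fun x => v x α) (ENNReal.ofReal p) μ) →
        0 < ∑ α : A, (eLpNorm (fun x => v x α) (ENNReal.ofReal p) μ).toReal →
        (∑ α : A, (eLpNorm (fun x => v x α) (ENNReal.ofReal p) μ).toReal) ≤ δ →
        ∀ αv : (Fin n → ℝ) → A, Measurable αv →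
          (∀ᵐ x ∂μ, u x (αv x) + v x (αv x) = ⨆ α : A, (u x α + v x α)) →
          (eLpNorm
              (fun x => (⨆ α : A, (u x α + v x α)) - (⨆ α : A, u x α) - v x (αv x)) 2 μ).toReal
            ≤ ε * ∑ α : A, (eLpNorm (fun x => v x α) (ENNReal.ofReal p) μ).toReal := by
  intro ε hε
  have : IsFiniteMeasure μ := hμ ▸ ⟨by simpa using hΩbdd.measure_lt_top⟩
  have h2p : (2 : ℝ≥0∞) < ENNReal.ofReal p := by
    simpa using ENNReal.ofReal_lt_ofReal_iff'.2 ⟨hp, by linarith⟩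
  obtain ⟨δ, hδ, hδε⟩ := exists_pos_eLpNorm_supRemainder_le two_ne_zero h2p
    ENNReal.ofReal_ne_top (one_le_two.trans h2p.le) (fun α => (hu α).aemeasurable)
    (ENNReal.ofReal_pos.2 hε)
  have hδ1 : min δ 1 ≠ ∞ := (min_lt_of_right_lt ENNReal.one_lt_top).ne
  refine ⟨(min δ 1).toReal, ENNReal.toReal_pos (lt_min hδ one_pos).ne' hδ1, ?_⟩
  intro v hv _ hvδ αv _ hαv
  set s := ∑ α, eLpNorm (fun x => v x α) (ENNReal.ofReal p) μ
  have hs : s ≠ ∞ := ENNReal.sum_ne_top.2 fun α _ => (hv α).2.ne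
  rw [← ENNReal.toReal_sum fun α _ => (hv α).2.ne] at hvδ ⊢
  have hsδ : s ≤ δ := ((ENNReal.toReal_le_toReal hs hδ1).1 hvδ).trans (min_le_left _ _)
  calc _ ≤ (ENNReal.ofReal ε * s).toReal :=
        ENNReal.toReal_mono (ENNReal.mul_ne_top ENNReal.ofReal_ne_top hs)
          (hδε v (fun α => (hv α).1) hsδ αv hαv)
    _ = ε * s.toReal := by rw [ENNReal.toReal_mul, ENNReal.toReal_ofReal hε.le]

/-- Semismoothness of the pointwise maximum operator `F₂ : (L^p(μ))^{|A|} → L²(μ)`,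
`F₂(u)(x) = max_α u x α`, on a bounded measurable `Ω ⊆ ℝⁿ` with `μ` the restricted
Lebesgue measure and `p ∈ (2, ∞)`: generalized differentials are given by composition
with measurable maximizing selections `αv` for the perturbed point. -/
theorem stmt9 {n : ℕ} {A : Type*} [Fintype A] [Nonempty A]
    [MeasurableSpace A] [MeasurableSingletonClass A]
    (Ω : Set (Fin n → ℝ)) (hΩmeas : MeasurableSet Ω) (hΩbdd : Bornology.IsBounded Ω)
    (p : ℝ) (hp : 2 < p)
    (μ : Measure (Fin n → ℝ)) (hμ : μ = volume.restrict Ω)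
    (u : (Fin n → ℝ) → A → ℝ)
    (hu : ∀ α : A, MemLp (fun x => u x α) (ENNReal.ofReal p) μ) :
    ∀ ε > (0 : ℝ), ∃ δ > (0 : ℝ),
      ∀ v : (Fin n → ℝ) → A → ℝ,
        (∀ α : A, MemLp (fun x => v x α) (ENNReal.ofReal p) μ) →
        0 < ∑ α : A, (eLpNorm (fun x => v x α) (ENNReal.ofReal p) μ).toReal →
        (∑ α : A, (eLpNorm (fun x => v x α) (ENNReal.ofReal p) μ).toReal) ≤ δ →
        ∀ αv : (Fin n → ℝ) → A, Measurable αv →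
          (∀ᵐ x ∂μ, u x (αv x) + v x (αv x) = ⨆ α : A, (u x α + v x α)) →
          (eLpNorm
              (fun x => (⨆ α : A, (u x α + v x α)) - (⨆ α : A, u x α) - v x (αv x)) 2 μ).toReal
            ≤ ε * ∑ α : A, (eLpNorm (fun x => v x α) (ENNReal.ofReal p) μ).toReal :=
  stmt9_general Ω hΩbdd p hp μ hμ u hu
end

section
/- Let Y and Z be real Banach spaces, F : Y → Z a map, u* ∈ Y, C > 0, and let D assign to each v ∈ Y a set D(v) of continuous linear operators from Y to Z. Assume: (i) for every ε > 0 there exists δ > 0 such that for all s ∈ Y with ‖s‖_Y ≤ δ and all M ∈ D(u* + s), ‖F(u* + s) − F(u*) − M s‖_Z ≤ ε‖s‖_Y; and (ii) for every v ∈ Y there exists M ∈ D(v) such that ‖y‖_Y ≤ C‖M y‖_Z for all y ∈ Y. Then there exists δ₀ > 0 such that ‖F(v) − F(u*)‖_Z ≥ ‖v − u*‖_Y/(2C) for all v ∈ Y with ‖v − u*‖_Y ≤ δ₀. -/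
/-- If `F : Y → Z` between Banach spaces is semismooth at a zero `u*` with respect to a
generalized differential `D`, and for every `v` some `M ∈ D v` satisfies
`‖y‖ ≤ C‖M y‖` for all `y`, then near `u*` one has
`‖F v - F u*‖ ≥ ‖v - u*‖ / (2C)`. -/
theorem stmt12 {Y Z : Type*} [NormedAddCommGroup Y] [NormedSpace ℝ Y] [CompleteSpace Y]
    [NormedAddCommGroup Z] [NormedSpace ℝ Z] [CompleteSpace Z]
    (F : Y → Z) (ustar : Y) (C : ℝ) (hC : 0 < C)
    (D : Y → Set (Y →L[ℝ] Z))
    (hsemi : ∀ ε > (0 : ℝ), ∃ δ > (0 : ℝ), ∀ s : Y, ‖s‖ ≤ δ → ∀ M ∈ D (ustar + s),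
      ‖F (ustar + s) - F ustar - M s‖ ≤ ε * ‖s‖)
    (hinv : ∀ v : Y, ∃ M ∈ D v, ∀ y : Y, ‖y‖ ≤ C * ‖M y‖) :
    ∃ δ₀ > (0 : ℝ), ∀ v : Y, ‖v - ustar‖ ≤ δ₀ →
      ‖v - ustar‖ / (2 * C) ≤ ‖F v - F ustar‖ := by
  obtain ⟨δ, hδ, h⟩ := hsemi (1 / (2 * C)) (by positivity)
  refine ⟨δ, hδ, fun v hv => ?_⟩
  set s := v - ustar with hs
  have hvs : v = ustar + s := by simp [hs]
  obtain ⟨M, hM, hMb⟩ := hinv v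
  have h1 : ‖F v - F ustar - M s‖ ≤ 1 / (2 * C) * ‖s‖ := by
    have := h s hv M (hvs ▸ hM)
    rwa [← hvs] at this
  have h2 : ‖s‖ ≤ C * ‖M s‖ := hMb s
  have h3 : ‖M s‖ ≤ ‖F v - F ustar - M s‖ + ‖F v - F ustar‖ := by
    have := norm_sub_le (F v - F ustar - M s) (F v - F ustar)
    simpa [norm_sub_rev] using this
  have : ‖s‖ ≤ C * (1 / (2 * C) * ‖s‖ + ‖F v - F ustar‖) :=
    h2.trans (mul_le_mul_of_nonneg_left (h3.trans (by linarith)) hC.le)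
  have h4 : C * (1 / (2 * C) * ‖s‖ + ‖F v - F ustar‖) = ‖s‖ / 2 + C * ‖F v - F ustar‖ := by
    field_simp
  rw [h4] at this
  rw [div_le_iff₀ (by positivity)]
  nlinarith
end

section
/- Let Ω ⊆ ℝⁿ be a Lebesgue-measurable set, A a nonempty finite set, B a nonempty compact metric space, and ℓ : Ω × ℝ^{1+n} × A × B → ℝ a function such that for every x ∈ Ω, (w,α,β) ↦ ℓ(x,w,α,β) is continuous on ℝ^{1+n} × A × B (A carrying the discrete topology). Set h(x,w,α) = min_{β∈B} ℓ(x,w,α,β). Let w_k, w : Ω → ℝ^{1+n} with w_k(x) → w(x) for almost every x ∈ Ω. Suppose for each k ∈ ℕ the functions α_k : Ω → A and β_k : Ω → B satisfy, for almost every x ∈ Ω, h(x, w_k(x), α_k(x)) = max_{α∈A} h(x, w_k(x), α) and ℓ(x, w_k(x), α_k(x), β_k(x)) = min_{β∈B} ℓ(x, w_k(x), α_k(x), β). If there exist α* : Ω → A and β* : Ω → B such that, for almost every x ∈ Ω, α*(x) is the unique maximizer of α ↦ h(x, w(x), α) over A and β*(x) is the unique minimizer of β ↦ ℓ(x, w(x),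 α*(x), β) over B, then for almost every x ∈ Ω one has α_k(x) = α*(x) for all sufficiently large k and β_k(x) → β*(x) in B as k → ∞. -/
open MeasureTheory Filter

/-- Almost-everywhere convergence of optimizing control laws: given `ℓ` continuous in
`(w, α, β)` for each `x ∈ Ω`, `h x w α = min_β ℓ x w α β`, iterates `w_k → w` a.e. on a
measurable `Ω ⊆ ℝⁿ`, maximizing/minimizing selections `(α_k, β_k)` at `w_k`, and unique
optimizers `(α*, β*)` at `w`, one has a.e. `α_k = α*` eventually and `β_k → β*`. -/
theorem stmt16 {n : ℕ} {A : Type*} [Fintype A] [Nonempty A]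
    [TopologicalSpace A] [DiscreteTopology A]
    {B : Type*} [MetricSpace B] [CompactSpace B] [Nonempty B]
    (Ω : Set (Fin n → ℝ)) (hΩ : MeasurableSet Ω)
    (ℓ : (Fin n → ℝ) → (Fin (1 + n) → ℝ) → A → B → ℝ)
    (hcont : ∀ x ∈ Ω, Continuous (fun q : (Fin (1 + n) → ℝ) × A × B => ℓ x q.1 q.2.1 q.2.2))
    (h : (Fin n → ℝ) → (Fin (1 + n) → ℝ) → A → ℝ)
    (hh : ∀ x w α, h x w α = ⨅ β : B, ℓ x w α β)
    (wk : ℕ → (Fin n → ℝ) → (Fin (1 + n) → ℝ)) (w : (Fin n → ℝ) → (Fin (1 + n) → ℝ))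
    (hw : ∀ᵐ x ∂(volume.restrict Ω), Tendsto (fun k => wk k x) atTop (nhds (w x)))
    (αk : ℕ → (Fin n → ℝ) → A) (βk : ℕ → (Fin n → ℝ) → B)
    (hopt : ∀ k : ℕ, ∀ᵐ x ∂(volume.restrict Ω),
      (∀ α : A, h x (wk k x) α ≤ h x (wk k x) (αk k x)) ∧
        (∀ β : B, ℓ x (wk k x) (αk k x) (βk k x) ≤ ℓ x (wk k x) (αk k x) β))
    (αstar : (Fin n → ℝ) → A) (βstar : (Fin n → ℝ) → B)
    (hstar : ∀ᵐ x ∂(volume.restrict Ω),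
      (∀ α : A, h x (w x) α ≤ h x (w x) (αstar x)) ∧
        (∀ α : A, (∀ α' : A, h x (w x) α' ≤ h x (w x) α) → α = αstar x) ∧
        (∀ β : B, ℓ x (w x) (αstar x) (βstar x) ≤ ℓ x (w x) (αstar x) β) ∧
        (∀ β : B, (∀ β' : B, ℓ x (w x) (αstar x) β ≤ ℓ x (w x) (αstar x) β') → β = βstar x)) :
    ∀ᵐ x ∂(volume.restrict Ω),
      (∃ K : ℕ, ∀ k ≥ K, αk k x = αstar x) ∧
        Tendsto (fun k => βk k x) atTop (nhds (βstar x)) := by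
  have hopt' : ∀ᵐ x ∂(volume.restrict Ω), ∀ k,
      (∀ α : A, h x (wk k x) α ≤ h x (wk k x) (αk k x)) ∧
        (∀ β : B, ℓ x (wk k x) (αk k x) (βk k x) ≤ ℓ x (wk k x) (αk k x) β) :=
    (ae_all_iff).mpr hopt
  filter_upwards [hw, hopt', hstar, ae_restrict_mem hΩ] with x hwx hoptx hstarx hxΩ
  obtain ⟨hmax, huniqα, hmin, huniqβ⟩ := hstarx
  have hc := hcont x hxΩ
  -- continuity of `ℓ x · α ·` jointly in `(w, β)`
  have hcℓ : ∀ α : A, Continuous (fun p : (Fin (1 + n) → ℝ) × B => ℓ x p.1 α p.2) := by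
    intro α
    have hmap : Continuous (fun p : (Fin (1 + n) → ℝ) × B =>
        ((p.1, α, p.2) : (Fin (1 + n) → ℝ) × A × B)) := by fun_prop
    exact hc.comp hmap
  -- continuity of `h x · α` in `w`
  have hch : ∀ α : A, Continuous (fun v => h x v α) := by
    intro α
    have key : Continuous fun v => sInf ((fun β : B => ℓ x v α β) '' Set.univ) := by
      refine isCompact_univ.continuous_sInf ?_
      exact hcℓ α
    have heq : (fun v => h x v α) = fun v => sInf ((fun β : B => ℓ x v α β) '' Set.univ) := by
      funext v
      rw [hh, Set.image_univ]
      rfl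
    rw [heq]; exact key
  have htend : ∀ α : A, Tendsto (fun k => h x (wk k x) α) atTop (nhds (h x (w x) α)) := by
    intro α
    exact ((hch α).tendsto _).comp hwx
  -- strict gap at the unique maximizer
  have hstrict : ∀ α : A, α ≠ αstar x → h x (w x) α < h x (w x) (αstar x) := by
    intro α hα
    rcases lt_or_eq_of_le (hmax α) with hlt | heq
    · exact hlt
    · exact absurd (huniqα α fun α' => heq ▸ hmax α') hα
  have hev : ∀ᶠ k in atTop, ∀ α : A, α ≠ αstar x →
      h x (wk k x) α < h x (wk k x) (αstar x) := by
    rw [eventually_all]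
    intro α
    by_cases hα : α = αstar x
    · exact Eventually.of_forall fun k h' => absurd hα h'
    · filter_upwards [(htend α).eventually_lt (htend (αstar x)) (hstrict α hα)] with k hk _
      exact hk
  have hαev : ∀ᶠ k in atTop, αk k x = αstar x := by
    filter_upwards [hev] with k hk
    by_contra hne
    exact absurd ((hoptx k).1 (αstar x)) (not_le.mpr (hk _ hne))
  refine ⟨?_, ?_⟩
  · obtain ⟨K, hK⟩ := eventually_atTop.mp hαev
    exact ⟨K, hK⟩
  · -- β convergence via subsequences
    refine tendsto_of_subseq_tendsto fun ns hns => ?_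
    obtain ⟨b, φ, hφ, hbtend⟩ := CompactSpace.tendsto_subseq (fun m => βk (ns m) x)
    refine ⟨φ, ?_⟩
    have hnsφ : Tendsto (fun m => ns (φ m)) atTop atTop := hns.comp hφ.tendsto_atTop
    have hbtend' : Tendsto (fun m => βk (ns (φ m)) x) atTop (nhds b) := hbtend
    have hb : b = βstar x := by
      apply huniqβ
      intro β
      have h1 : Tendsto (fun m => ℓ x (wk (ns (φ m)) x) (αstar x) (βk (ns (φ m)) x)) atTop
          (nhds (ℓ x (w x) (αstar x) b)) :=
        ((hcℓ (αstar x)).tendsto _).comp ((hwx.comp hnsφ).prodMk_nhds hbtend')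
      have h2 : Tendsto (fun m => ℓ x (wk (ns (φ m)) x) (αstar x) β) atTop
          (nhds (ℓ x (w x) (αstar x) β)) :=
        ((hcℓ (αstar x)).tendsto _).comp ((hwx.comp hnsφ).prodMk_nhds tendsto_const_nhds)
      refine le_of_tendsto_of_tendsto h1 h2 ?_
      filter_upwards [hnsφ.eventually hαev] with m hm
      have := (hoptx (ns (φ m))).2 β
      rwa [hm] at this
    rw [← hb]
    exact hbtend'
end
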